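/- (Rényi-Quantum Star Test) Let n ≥ 2 and let G be a finite simple graph on n vertices with at least one edge, with vertex degrees d₁, …, dₙ and degree sum d_G. If d_G² / (Σ_{i=1}^n d_i² + d_G) ≥ (2n−2)/n^{n/(2n−2)}, then S(G) ≥ H₂(G) ≥ log₂(2n−2) − (n/(2n−2))·log₂ n = S(K_{1,n−1}). -/

import Mathlib

open Matrix Real Finset

namespace VNE

variable {V : Type*} [Fintype V] [DecidableEq V]

/-- The density matrix `ρ(G) = L(G) / tr (L(G))` of a graph. -/
noncomputable def rho (G : SimpleGraph V) : Matrix V V ℝ :=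
  letI := Classical.decRel G.Adj
  ((G.lapMatrix ℝ).trace)⁻¹ • G.lapMatrix ℝ

lemma rho_isHermitian (G : SimpleGraph V) : (rho G).IsHermitian := by
  letI := Classical.decRel G.Adj
  have h : (G.lapMatrix ℝ).IsHermitian := (SimpleGraph.posSemidef_lapMatrix ℝ G).1
  unfold rho
  unfold Matrix.IsHermitian at h ⊢
  rw [Matrix.conjTranspose_smul, h, star_trivial]

/-- The eigenvalues of the density matrix of `G`. -/
noncomputable def eigs (G : SimpleGraph V) : V → ℝ :=
  (rho_isHermitian G).eigenvalues

/-- The von Neumann entropy of a graph. -/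
noncomputable def vnEntropy (G : SimpleGraph V) : ℝ :=
  ∑ v, -(eigs G v * Real.logb 2 (eigs G v))

/-- The Rényi α-entropy of a graph. -/
noncomputable def renyiEntropy (α : ℝ) (G : SimpleGraph V) : ℝ :=
  (1 / (1 - α)) * Real.logb 2 (∑ v, eigs G v ^ α)

/-- The Rényi 2-entropy of a graph, `−log₂ tr(ρ(G)²)`. -/
noncomputable def renyi2 (G : SimpleGraph V) : ℝ :=
  - Real.logb 2 ((rho G * rho G).trace)

/-- `tr₂(G) = tr(ρ(G)²)`. -/
noncomputable def tr2 (G : SimpleGraph V) : ℝ :=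
  (rho G * rho G).trace

/-- The degree of a vertex, as a real number. -/
noncomputable def deg (G : SimpleGraph V) (v : V) : ℝ :=
  letI := Classical.decRel G.Adj
  (G.degree v : ℝ)

/-- The degree sum `d_G` of a graph. -/
noncomputable def degSum (G : SimpleGraph V) : ℝ :=
  ∑ v, deg G v

/-- The star `K_{1,n-1}` on `n` vertices, with center the vertex `0`. -/
def starOn (n : ℕ) : SimpleGraph (Fin n) where
  Adj x y := x ≠ y ∧ (x.val = 0 ∨ y.val = 0)
  symm := ⟨fun _ _ h => ⟨h.1.symm, h.2.symm⟩⟩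
  loopless := ⟨fun _ h => h.1 rfl⟩

/-! ### Auxiliary general lemmas -/

set_option linter.unusedSectionVars false

lemma conj_sq_helper (U D sU : Matrix V V ℝ) (h : sU * U = 1) :
    (U * D * sU) * (U * D * sU) = U * (D * D) * sU := by
  simp only [Matrix.mul_assoc]
  rw [← Matrix.mul_assoc sU U, h, one_mul]

lemma trace_eq_sum_eigenvalues {A : Matrix V V ℝ} (hA : A.IsHermitian) :
    A.trace = ∑ v, hA.eigenvalues v := by
  nth_rewrite 1 [hA.spectral_theorem]
  rw [Unitary.conjStarAlgAut_apply]
  rw [trace_mul_cycle]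
  rw [show (star (hA.eigenvectorUnitary : Matrix V V ℝ)) * (hA.eigenvectorUnitary : Matrix V V ℝ) = 1 from Unitary.coe_star_mul_self _, one_mul]
  simp [Function.comp, trace_diagonal]

lemma trace_sq_eq_sum_eigenvalues_sq {A : Matrix V V ℝ} (hA : A.IsHermitian) :
    (A * A).trace = ∑ v, hA.eigenvalues v ^ 2 := by
  have hU : (star (hA.eigenvectorUnitary : Matrix V V ℝ)) * (hA.eigenvectorUnitary : Matrix V V ℝ) = 1 := Unitary.coe_star_mul_self _
  set ev := hA.eigenvalues with hev
  rw [show A = (hA.eigenvectorUnitary : Matrix V V ℝ) * diagonal (RCLike.ofReal ∘ ev) *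
      (star (hA.eigenvectorUnitary : Matrix V V ℝ)) from hA.spectral_theorem]
  rw [conj_sq_helper _ _ _ hU, trace_mul_cycle, ← Matrix.mul_assoc, hU, one_mul,
    diagonal_mul_diagonal]
  simp [Function.comp, trace_diagonal, pow_two]

lemma lap_apply_eq (G : SimpleGraph V) [DecidableRel G.Adj] (v w : V) :
    G.lapMatrix ℝ v w = (if v = w then (G.degree v : ℝ) else 0) - (if G.Adj v w then 1 else 0) := by
  simp [SimpleGraph.lapMatrix, SimpleGraph.degMatrix, Matrix.sub_apply, Matrix.diagonal_apply]

lemma trace_lap (G : SimpleGraph V) :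
    letI := Classical.decRel G.Adj
    (G.lapMatrix ℝ).trace = degSum G := by
  letI := Classical.decRel G.Adj
  unfold degSum deg
  unfold Matrix.trace Matrix.diag
  refine Finset.sum_congr rfl fun v _ => ?_
  rw [lap_apply_eq]
  simp [G.irrefl]

lemma deg_eq_sum_ite (G : SimpleGraph V) [DecidableRel G.Adj] (v : V) :
    (G.degree v : ℝ) = ∑ w, (if G.Adj v w then (1:ℝ) else 0) := by
  rw [Finset.sum_boole]
  congr 1
  rw [← SimpleGraph.neighborFinset_eq_filter, SimpleGraph.degree]

lemma trace_lap_sq (G : SimpleGraph V) :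
    letI := Classical.decRel G.Adj
    (G.lapMatrix ℝ * G.lapMatrix ℝ).trace = ∑ v, deg G v ^ 2 + degSum G := by
  letI := Classical.decRel G.Adj
  unfold Matrix.trace Matrix.diag
  have key : ∀ v, (G.lapMatrix ℝ * G.lapMatrix ℝ) v v = deg G v ^ 2 + deg G v := by
    intro v
    rw [Matrix.mul_apply]
    have : ∀ w, G.lapMatrix ℝ v w * G.lapMatrix ℝ w v =
        (if v = w then (deg G v)^2 else 0) + (if G.Adj v w then (1:ℝ) else 0) := by
      intro w
      rw [lap_apply_eq, lap_apply_eq]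
      by_cases h : v = w
      · subst h; simp [G.irrefl, deg, pow_two]
      · have h' : ¬ w = v := fun hh => h hh.symm
        by_cases ha : G.Adj v w
        · simp [h, h', ha, G.adj_symm ha]
        · have ha' : ¬ G.Adj w v := fun hh => ha (G.adj_symm hh)
          simp [h, h', ha, ha']
    rw [Finset.sum_congr rfl fun w _ => this w, Finset.sum_add_distrib]
    congr 1
    · simp
    · rw [← deg_eq_sum_ite]; rfl
  rw [Finset.sum_congr rfl fun v _ => key v, Finset.sum_add_distrib]
  rfl

lemma degSum_nonneg (G : SimpleGraph V) : 0 ≤ degSum G := by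
  refine Finset.sum_nonneg fun v _ => ?_
  unfold deg
  positivity

lemma degSum_pos (G : SimpleGraph V) (hG : G.edgeSet.Nonempty) : 0 < degSum G := by
  letI := Classical.decRel G.Adj
  obtain ⟨e, he⟩ := hG
  induction e with
  | _ u w =>
    refine Finset.sum_pos' (fun v _ => by unfold deg; positivity) ⟨u, Finset.mem_univ u, ?_⟩
    unfold deg
    have : 0 < G.degree u := by
      rw [SimpleGraph.degree_pos_iff_exists_adj]
      exact ⟨w, he⟩
    exact_mod_cast this

lemma sum_eigs_eq_one (G : SimpleGraph V) (hG : G.edgeSet.Nonempty) :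
    ∑ v, eigs G v = 1 := by
  letI := Classical.decRel G.Adj
  have h := trace_eq_sum_eigenvalues (rho_isHermitian G)
  unfold eigs
  rw [← h]
  unfold rho
  rw [Matrix.trace_smul, smul_eq_mul]
  have hpos : (G.lapMatrix ℝ).trace > 0 := by rw [trace_lap]; exact degSum_pos G hG
  field_simp

lemma rho_posSemidef (G : SimpleGraph V) : (rho G).PosSemidef := by
  letI := Classical.decRel G.Adj
  have hrw : rho G = ((G.lapMatrix ℝ).trace)⁻¹ • G.lapMatrix ℝ := rfl
  have h1 : (0:ℝ) ≤ ((G.lapMatrix ℝ).trace)⁻¹ := by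
    rw [trace_lap]
    exact inv_nonneg.mpr (degSum_nonneg G)
  rw [hrw]
  exact (SimpleGraph.posSemidef_lapMatrix ℝ G).smul h1

lemma eigs_nonneg (G : SimpleGraph V) (v : V) : 0 ≤ eigs G v :=
  (rho_posSemidef G).eigenvalues_nonneg v

lemma tr2_eq (G : SimpleGraph V) : tr2 G = (∑ v, deg G v ^ 2 + degSum G) / degSum G ^ 2 := by
  letI := Classical.decRel G.Adj
  unfold tr2
  have hrw : rho G = ((G.lapMatrix ℝ).trace)⁻¹ • G.lapMatrix ℝ := rfl
  rw [hrw, Matrix.smul_mul, Matrix.mul_smul, smul_smul, Matrix.trace_smul, smul_eq_mul,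
    trace_lap_sq]
  rw [show (G.lapMatrix ℝ).trace = degSum G from trace_lap G]
  rw [pow_two]
  rw [div_eq_mul_inv, mul_comm, mul_inv]

lemma sum_eigs_sq_eq_tr2 (G : SimpleGraph V) : ∑ v, eigs G v ^ 2 = tr2 G :=
  (trace_sq_eq_sum_eigenvalues_sq (rho_isHermitian G)).symm

lemma jensen_key (W : Type*) [Fintype W] (lam : W → ℝ) (hnn : ∀ v, 0 ≤ lam v)
    (hsum : ∑ v, lam v = 1) :
    ∑ v, -(lam v * Real.logb 2 (lam v)) ≥ - Real.logb 2 (∑ v, lam v ^ 2) := by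
  classical
  set t := Finset.univ.filter (fun v => lam v ≠ 0) with ht
  have hw1 : ∑ v ∈ t, lam v = 1 := by
    rw [ht, Finset.sum_filter_ne_zero]; exact hsum
  have hmem : ∀ v ∈ t, lam v ∈ Set.Ioi (0:ℝ) := by
    intro v hv
    rw [ht, Finset.mem_filter] at hv
    exact lt_of_le_of_ne (hnn v) (Ne.symm hv.2)
  have jensen := (strictConcaveOn_log_Ioi.concaveOn).le_map_sum
    (fun v _ => hnn v) hw1 hmem
  simp only [smul_eq_mul] at jensen
  have hsq : ∑ v ∈ t, lam v * lam v = ∑ v, lam v ^ 2 := by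
    rw [ht]
    rw [Finset.sum_filter_of_ne (fun v _ h => by
      intro h0; apply h; show lam v * lam v = 0; rw [h0]; ring)]
    exact Finset.sum_congr rfl fun v _ => (pow_two _).symm
  have hlogb : ∑ v, lam v * Real.logb 2 (lam v) =
      (∑ v ∈ t, lam v * Real.log (lam v)) / Real.log 2 := by
    rw [ht, ← Finset.sum_filter_of_ne (s := Finset.univ)
      (f := fun v => lam v * Real.logb 2 (lam v)) (p := fun v => lam v ≠ 0) (fun v _ h => by
        intro h0; apply h; show lam v * Real.logb 2 (lam v) = 0; rw [h0]; ring)]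
    rw [Finset.sum_div]
    refine Finset.sum_congr rfl fun v _ => ?_
    rw [Real.logb]; ring
  have hlog2 : (0:ℝ) < Real.log 2 := Real.log_pos one_lt_two
  have hmain : ∑ v, lam v * Real.logb 2 (lam v) ≤ Real.logb 2 (∑ v, lam v ^ 2) := by
    rw [hlogb, Real.logb, ← hsq]
    gcongr
  rw [ge_iff_le, Finset.sum_neg_distrib, neg_le_neg_iff]
  exact hmain

lemma vnEntropy_ge_renyi2 (G : SimpleGraph V) (hG : G.edgeSet.Nonempty) :
    vnEntropy G ≥ renyi2 G := by
  have key := jensen_key V (eigs G) (eigs_nonneg G) (sum_eigs_eq_one G hG)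
  unfold vnEntropy renyi2
  rw [show (rho G * rho G).trace = ∑ v, eigs G v ^ 2 from
    trace_sq_eq_sum_eigenvalues_sq (rho_isHermitian G)]
  exact key

lemma renyi2_eq (G : SimpleGraph V) :
    renyi2 G = Real.logb 2 (degSum G ^ 2 / (∑ v, deg G v ^ 2 + degSum G)) := by
  unfold renyi2
  rw [show (rho G * rho G).trace = tr2 G from rfl, tr2_eq, ← Real.logb_inv, inv_div]

end VNE

namespace VNE

/-! ### The star graph -/

noncomputable def uu (n : ℕ) : Fin n → ℝ := fun i => if i.val = 0 then 1 else 0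
noncomputable def jj (n : ℕ) : Fin n → ℝ := fun _ => 1

lemma vecMulVec_mul {V : Type*} [Fintype V] (a b c d : V → ℝ) :
    vecMulVec a b * vecMulVec c d = (∑ k, b k * c k) • vecMulVec a d := by
  ext i j
  simp only [Matrix.mul_apply, vecMulVec_apply, Matrix.smul_apply, smul_eq_mul, Finset.sum_mul]
  exact Finset.sum_congr rfl fun k _ => by ring

variable {n : ℕ}

lemma card_val_zero (hn : 2 ≤ n) : (univ.filter (fun v : Fin n => v.val = 0)).card = 1 := by
  rw [show (univ.filter (fun v : Fin n => v.val = 0)) = {⟨0, by omega⟩} from ?_, Finset.card_singleton]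
  ext v
  simp [Fin.ext_iff]

lemma card_val_ne_zero (hn : 2 ≤ n) :
    (univ.filter (fun v : Fin n => ¬ v.val = 0)).card = n - 1 := by
  have := Finset.card_filter_add_card_filter_not
    (s := (univ : Finset (Fin n))) (p := fun v : Fin n => v.val = 0)
  rw [card_val_zero hn] at this
  simp only [Finset.card_univ, Fintype.card_fin] at this
  omega

lemma sum_uu_uu (hn : 2 ≤ n) : ∑ k, uu n k * uu n k = 1 := by
  unfold uu
  rw [Finset.sum_congr rfl (fun k _ => by
    show (if k.val = 0 then (1:ℝ) else 0) * (if k.val = 0 then (1:ℝ) else 0)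
      = if k.val = 0 then 1 else 0
    split_ifs <;> ring)]
  rw [Finset.sum_ite, Finset.sum_const, Finset.sum_const, card_val_zero hn]
  simp

lemma sum_uu_jj (hn : 2 ≤ n) : ∑ k, uu n k * jj n k = 1 := by
  unfold uu jj
  rw [Finset.sum_congr rfl (fun k _ => by
    show (if k.val = 0 then (1:ℝ) else 0) * 1 = if k.val = 0 then 1 else 0
    split_ifs <;> ring)]
  rw [Finset.sum_ite, Finset.sum_const, Finset.sum_const, card_val_zero hn]
  simp

lemma sum_jj_uu (hn : 2 ≤ n) : ∑ k, jj n k * uu n k = 1 := by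
  rw [Finset.sum_congr rfl (fun k _ => mul_comm (jj n k) (uu n k))]
  exact sum_uu_jj hn

lemma sum_jj_jj : ∑ k : Fin n, jj n k * jj n k = n := by
  unfold jj; simp

lemma star_degree (hn : 2 ≤ n) (v : Fin n) [DecidableRel (starOn n).Adj] :
    (starOn n).degree v = if v.val = 0 then n - 1 else 1 := by
  rw [← SimpleGraph.card_neighborFinset_eq_degree]
  by_cases hv : v.val = 0
  · rw [if_pos hv]
    rw [show (starOn n).neighborFinset v = univ.filter (fun w => ¬ w = v) from ?_]
    · rw [Finset.filter_not, Finset.filter_eq', if_pos (Finset.mem_univ v)]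
      rw [Finset.card_sdiff_of_subset (by simp)]
      simp
    · ext w
      simp only [SimpleGraph.mem_neighborFinset, Finset.mem_filter, Finset.mem_univ, true_and]
      show v ≠ w ∧ (v.val = 0 ∨ w.val = 0) ↔ ¬ w = v
      constructor
      · exact fun h hh => h.1 hh.symm
      · exact fun h => ⟨fun hh => h hh.symm, Or.inl hv⟩
  · rw [if_neg hv]
    rw [show (starOn n).neighborFinset v = {⟨0, by omega⟩} from ?_]
    · simp
    · ext w
      simp only [SimpleGraph.mem_neighborFinset, Finset.mem_singleton]
      show (v ≠ w ∧ (v.val = 0 ∨ w.val = 0)) ↔ w = ⟨0, by omega⟩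
      constructor
      · rintro ⟨hne, h0 | h0⟩
        · exact absurd h0 hv
        · exact Fin.ext h0
      · rintro rfl
        exact ⟨fun hh => hv (by rw [hh]), Or.inr rfl⟩

lemma star_lap_eq (hn : 2 ≤ n) [DecidableRel (starOn n).Adj] :
    (starOn n).lapMatrix ℝ =
      1 + (n:ℝ) • vecMulVec (uu n) (uu n) - vecMulVec (uu n) (jj n)
        - vecMulVec (jj n) (uu n) := by
  ext i j
  simp only [SimpleGraph.lapMatrix, SimpleGraph.degMatrix, Matrix.sub_apply, Matrix.add_apply,
    Matrix.diagonal_apply, Matrix.smul_apply, Matrix.one_apply, vecMulVec_apply, smul_eq_mul,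
    SimpleGraph.adjMatrix_apply]
  rw [star_degree hn]
  unfold uu jj
  by_cases hij : i = j
  · subst hij
    have hA : ¬ (starOn n).Adj i i := (starOn n).irrefl
    by_cases hi : i.val = 0
    · simp only [if_pos rfl, if_pos hi, if_neg hA]
      rw [Nat.cast_sub (by omega)]
      push_cast
      ring
    · simp only [if_pos rfl, if_neg hi, if_neg hA]
      push_cast
      ring
  · by_cases hi : i.val = 0
    · have hj : ¬ j.val = 0 := fun hj => hij (Fin.ext (by omega))
      have hadj : (starOn n).Adj i j := ⟨hij, Or.inl hi⟩
      simp only [if_neg hij, if_pos hi, if_neg hj, if_pos hadj]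
      ring
    · by_cases hj : j.val = 0
      · have hadj : (starOn n).Adj i j := ⟨hij, Or.inr hj⟩
        simp only [if_neg hij, if_neg hi, if_pos hj, if_pos hadj]
        ring
      · have hadj : ¬ (starOn n).Adj i j := by
          rintro ⟨-, h | h⟩
          · exact hi h
          · exact hj h
        simp only [if_neg hij, if_neg hi, if_neg hj, if_neg hadj]
        ring

lemma star_cubic (hn : 2 ≤ n) [DecidableRel (starOn n).Adj] :
    (starOn n).lapMatrix ℝ * (((starOn n).lapMatrix ℝ - 1) *
      ((starOn n).lapMatrix ℝ - (n:ℝ) • 1)) = 0 := by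
  set P := vecMulVec (uu n) (uu n) with hP
  set Q := vecMulVec (uu n) (jj n) with hQ
  set R := vecMulVec (jj n) (uu n) with hR
  set S := vecMulVec (jj n) (jj n) with hS
  have hPP : P * P = P := by rw [hP, vecMulVec_mul, sum_uu_uu hn, one_smul]
  have hPQ : P * Q = Q := by rw [hP, hQ, vecMulVec_mul, sum_uu_uu hn, one_smul]
  have hPR : P * R = P := by rw [hP, hR, vecMulVec_mul, sum_uu_jj hn, one_smul]
  have hQP : Q * P = P := by rw [hP, hQ, vecMulVec_mul, sum_jj_uu hn, one_smul]
  have hQQ : Q * Q = Q := by rw [hQ, vecMulVec_mul, sum_jj_uu hn, one_smul]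
  have hQR : Q * R = (n:ℝ) • P := by rw [hQ, hR, hP, vecMulVec_mul, sum_jj_jj]
  have hRP : R * P = R := by rw [hR, hP, vecMulVec_mul, sum_uu_uu hn, one_smul]
  have hRQ : R * Q = S := by rw [hR, hQ, hS, vecMulVec_mul, sum_uu_uu hn, one_smul]
  have hRR : R * R = R := by rw [hR, vecMulVec_mul, sum_uu_jj hn, one_smul]
  have hPS : P * S = Q := by rw [hP, hS, hQ, vecMulVec_mul, sum_uu_jj hn, one_smul]
  have hQS : Q * S = (n:ℝ) • Q := by rw [hQ, hS, vecMulVec_mul, sum_jj_jj]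
  have hRS : R * S = S := by rw [hR, hS, vecMulVec_mul, sum_uu_jj hn, one_smul]
  have hSP : S * P = R := by rw [hS, hP, hR, vecMulVec_mul, sum_jj_uu hn, one_smul]
  have hSQ : S * Q = S := by rw [hS, hQ, vecMulVec_mul, sum_jj_uu hn, one_smul]
  have hSR : S * R = (n:ℝ) • R := by rw [hS, hR, vecMulVec_mul, sum_jj_jj]
  rw [star_lap_eq hn]
  simp only [← hP, ← hQ, ← hR]
  have expand : (1 + (n:ℝ) • P - Q - R) * ((1 + (n:ℝ) • P - Q - R - 1) *
      (1 + (n:ℝ) • P - Q - R - (n:ℝ) • 1)) = 0 := by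
    simp only [mul_sub, sub_mul, mul_add, add_mul, smul_mul_assoc, mul_smul_comm,
      hPP, hPQ, hPR, hQP, hQQ, hQR, hRP, hRQ, hRR, hPS, hQS, hRS, hSP, hSQ, hSR,
      Matrix.one_mul, Matrix.mul_one, smul_smul]
    module
  exact expand

lemma star_edge (hn : 2 ≤ n) : (starOn n).edgeSet.Nonempty := by
  refine ⟨s(⟨0, by omega⟩, ⟨1, by omega⟩), ?_⟩
  rw [SimpleGraph.mem_edgeSet]
  exact ⟨by simp [Fin.ext_iff], Or.inl rfl⟩

lemma star_degSum (hn : 2 ≤ n) : degSum (starOn n) = 2 * (n:ℝ) - 2 := by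
  letI := Classical.decRel (starOn n).Adj
  unfold degSum deg
  rw [Finset.sum_congr rfl (fun v _ => by
    rw [star_degree hn, apply_ite (Nat.cast : ℕ → ℝ)])]
  rw [Finset.sum_ite, Finset.sum_const, Finset.sum_const, card_val_zero hn,
    card_val_ne_zero hn]
  simp only [nsmul_eq_mul, Nat.cast_one, mul_one, one_mul]
  rw [Nat.cast_sub (by omega)]
  push_cast
  ring

lemma star_degSq (hn : 2 ≤ n) :
    ∑ v, deg (starOn n) v ^ 2 = ((n:ℝ) - 1)^2 + ((n:ℝ) - 1) := by
  letI := Classical.decRel (starOn n).Adj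
  unfold deg
  rw [Finset.sum_congr rfl (fun v _ =>
    show ((starOn n).degree v : ℝ) ^ 2 = if v.val = 0 then ((n:ℝ)-1)^2 else 1 from by
      rw [star_degree hn]
      split_ifs with hv
      · rw [Nat.cast_sub (by omega)]; push_cast; ring
      · norm_num)]
  rw [Finset.sum_ite, Finset.sum_const, Finset.sum_const, card_val_zero hn,
    card_val_ne_zero hn]
  simp only [nsmul_eq_mul, Nat.cast_one, mul_one, one_mul]
  rw [Nat.cast_sub (by omega)]
  push_cast
  ring

lemma rho_star_cubic (hn : 2 ≤ n) :
    rho (starOn n) * ((rho (starOn n) - (2*(n:ℝ)-2)⁻¹ • 1) *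
      (rho (starOn n) - ((n:ℝ) * (2*(n:ℝ)-2)⁻¹) • 1)) = 0 := by
  letI := Classical.decRel (starOn n).Adj
  have hn2 : (2:ℝ) ≤ (n:ℝ) := by exact_mod_cast hn
  have h2n2 : (0:ℝ) < 2*(n:ℝ)-2 := by linarith
  set a : ℝ := (2*(n:ℝ)-2)⁻¹ with ha
  have htr : ((starOn n).lapMatrix ℝ).trace = 2*(n:ℝ)-2 := by
    rw [trace_lap, star_degSum hn]
  have hrho : rho (starOn n) = a • (starOn n).lapMatrix ℝ := by
    show ((starOn n).lapMatrix ℝ).trace⁻¹ • (starOn n).lapMatrix ℝ = _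
    rw [htr, ha]
  set L := (starOn n).lapMatrix ℝ with hL
  have h1 : rho (starOn n) - a • 1 = a • (L - 1) := by
    rw [hrho, smul_sub]
  have h2 : rho (starOn n) - ((n:ℝ) * a) • 1 = a • (L - (n:ℝ) • 1) := by
    rw [hrho, smul_sub, smul_smul, mul_comm a (n:ℝ)]
  rw [h1, h2, hrho]
  simp only [smul_mul_assoc, mul_smul_comm, smul_smul]
  rw [show L * ((L - 1) * (L - (n:ℝ) • 1)) = 0 from star_cubic hn, smul_zero]

lemma star_eigs_cases (hn : 2 ≤ n) (i : Fin n) :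
    eigs (starOn n) i = 0 ∨ eigs (starOn n) i = (2*(n:ℝ)-2)⁻¹ ∨
      eigs (starOn n) i = (n:ℝ) * (2*(n:ℝ)-2)⁻¹ := by
  have hA := rho_isHermitian (starOn n)
  set a : ℝ := (2*(n:ℝ)-2)⁻¹ with ha
  set b : ℝ := (n:ℝ) * (2*(n:ℝ)-2)⁻¹ with hb
  set μ := eigs (starOn n) i with hμ
  have hev : rho (starOn n) *ᵥ ⇑(hA.eigenvectorBasis i) = μ • ⇑(hA.eigenvectorBasis i) :=
    hA.mulVec_eigenvectorBasis i
  set v := ⇑(hA.eigenvectorBasis i) with hv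
  have hcub := rho_star_cubic hn
  have hstep : (rho (starOn n) * ((rho (starOn n) - a • 1) *
      (rho (starOn n) - b • 1))) *ᵥ v = (μ * ((μ - a) * (μ - b))) • v := by
    rw [← Matrix.mulVec_mulVec, ← Matrix.mulVec_mulVec]
    have e1 : (rho (starOn n) - b • 1) *ᵥ v = (μ - b) • v := by
      rw [Matrix.sub_mulVec, hev, Matrix.smul_mulVec, Matrix.one_mulVec, sub_smul]
    have e2 : (rho (starOn n) - a • 1) *ᵥ ((μ - b) • v) = ((μ - a) * (μ - b)) • v := by
      rw [Matrix.mulVec_smul, Matrix.sub_mulVec, hev, Matrix.smul_mulVec,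
        Matrix.one_mulVec, ← sub_smul, smul_smul, mul_comm]
    rw [e1, e2, Matrix.mulVec_smul, hev, smul_smul, mul_comm (μ - a) (μ - b)]
    ring_nf
  rw [hcub, Matrix.zero_mulVec] at hstep
  have hvne : v ≠ 0 := by
    intro hc
    have hb0 := hA.eigenvectorBasis.orthonormal.ne_zero i
    apply hb0
    ext k
    exact congrFun hc k
  have hzero : μ * ((μ - a) * (μ - b)) = 0 := by
    rcases smul_eq_zero.mp hstep.symm with h | h
    · exact h
    · exact absurd h hvne
  rcases mul_eq_zero.mp hzero with h | h
  · exact Or.inl h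
  · rcases mul_eq_zero.mp h with h' | h'
    · exact Or.inr (Or.inl (by linarith [sub_eq_zero.mp h']))
    · exact Or.inr (Or.inr (by linarith [sub_eq_zero.mp h']))

lemma sum_three {W : Type*} [Fintype W] (g : W → ℝ) (a b : ℝ)
    (hab : a ≠ b) (ha : a ≠ 0) (hb : b ≠ 0)
    (hcases : ∀ w, g w = 0 ∨ g w = a ∨ g w = b) :
    ∃ Y Z : ℝ, ∀ f : ℝ → ℝ, f 0 = 0 →
      ∑ w, f (g w) = Y * f a + Z * f b := by
  classical
  refine ⟨((univ.filter (fun w => g w = a)).card : ℝ),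
    ((univ.filter (fun w => g w = b)).card : ℝ), fun f hf0 => ?_⟩
  rw [← Finset.sum_filter_add_sum_filter_not univ (fun w => g w = a) (fun w => f (g w))]
  have h1 : ∑ w ∈ univ.filter (fun w => g w = a), f (g w) =
      ((univ.filter (fun w => g w = a)).card : ℝ) * f a := by
    rw [Finset.sum_congr rfl (fun w hw => by
      rw [(Finset.mem_filter.mp hw).2]), Finset.sum_const, nsmul_eq_mul]
  rw [h1]
  congr 1
  rw [← Finset.sum_filter_add_sum_filter_not (univ.filter (fun w => ¬ g w = a))
    (fun w => g w = b) (fun w => f (g w))]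
  have h2 : (univ.filter (fun w => ¬ g w = a)).filter (fun w => g w = b) =
      univ.filter (fun w => g w = b) := by
    rw [Finset.filter_filter]
    refine Finset.filter_congr fun w _ => ?_
    constructor
    · exact fun h => h.2
    · exact fun h => ⟨fun hc => hab (hc.symm.trans h), h⟩
  have h3 : ∑ w ∈ (univ.filter (fun w => ¬ g w = a)).filter (fun w => g w = b), f (g w) =
      ((univ.filter (fun w => g w = b)).card : ℝ) * f b := by
    rw [h2]
    rw [Finset.sum_congr rfl (fun w hw => by
      rw [(Finset.mem_filter.mp hw).2]), Finset.sum_const, nsmul_eq_mul]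
  have h4 : ∑ w ∈ (univ.filter (fun w => ¬ g w = a)).filter (fun w => ¬ g w = b), f (g w) = 0 := by
    refine Finset.sum_eq_zero fun w hw => ?_
    rw [Finset.filter_filter, Finset.mem_filter] at hw
    rcases hcases w with h | h | h
    · rw [h, hf0]
    · exact absurd h hw.2.1
    · exact absurd h hw.2.2
  rw [h3, h4, add_zero]

lemma star_vnEntropy (hn : 2 ≤ n) :
    Real.logb 2 (2 * (n : ℝ) - 2) - ((n : ℝ) / (2 * n - 2)) * Real.logb 2 n
      = vnEntropy (starOn n) := by
  have hn2 : (2:ℝ) ≤ (n:ℝ) := by exact_mod_cast hn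
  have h2n2 : (0:ℝ) < 2*(n:ℝ)-2 := by linarith
  have hnpos : (0:ℝ) < (n:ℝ) := by linarith
  set a : ℝ := (2*(n:ℝ)-2)⁻¹ with ha
  set b : ℝ := (n:ℝ) * (2*(n:ℝ)-2)⁻¹ with hb
  have hapos : 0 < a := inv_pos.mpr h2n2
  have hbpos : 0 < b := mul_pos hnpos hapos
  have h1 : a * (2*(n:ℝ)-2) = 1 := inv_mul_cancel₀ (ne_of_gt h2n2)
  have h2 : b * (2*(n:ℝ)-2) = (n:ℝ) := by
    rw [hb, mul_assoc, inv_mul_cancel₀ (ne_of_gt h2n2), mul_one]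
  have hab : a ≠ b := by
    intro hc
    rw [hc] at h1
    rw [h1] at h2
    nlinarith
  obtain ⟨Y, Z, hYZ⟩ := sum_three (eigs (starOn n)) a b hab (ne_of_gt hapos)
    (ne_of_gt hbpos) (star_eigs_cases hn)
  have e1 : Y * a + Z * b = 1 := by
    have t1 : ∑ w, eigs (starOn n) w = Y * a + Z * b := hYZ id rfl
    rw [← t1]
    exact sum_eigs_eq_one _ (star_edge hn)
  have htr2 : tr2 (starOn n) * (2*(n:ℝ)-2)^2 = ((n:ℝ)-1)^2 + ((n:ℝ)-1) + (2*(n:ℝ)-2) := by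
    rw [tr2_eq, star_degSum hn, star_degSq hn]
    field_simp
  have e2 : Y * a^2 + Z * b^2 = tr2 (starOn n) := by
    have t2 : ∑ w, eigs (starOn n) w ^ 2 = Y * a^2 + Z * b^2 :=
      hYZ (fun x => x^2) (by norm_num)
    rw [← t2]
    exact sum_eigs_sq_eq_tr2 _
  have e1' : Y + Z * (n:ℝ) = 2*(n:ℝ) - 2 := by
    linear_combination (2*(n:ℝ)-2) * e1 - Y * h1 - Z * h2
  have e2' : Y + Z * (n:ℝ)^2 = (n:ℝ)^2 + (n:ℝ) - 2 := by
    linear_combination (2*(n:ℝ)-2)^2 * e2 + htr2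
      - Y * (a*(2*(n:ℝ)-2) + 1) * h1 - Z * (b*(2*(n:ℝ)-2) + (n:ℝ)) * h2
  have hZ : Z = 1 := by
    have hne : (n:ℝ)^2 - (n:ℝ) ≠ 0 := by nlinarith
    have hkey : ((n:ℝ)^2 - (n:ℝ)) * Z = ((n:ℝ)^2 - (n:ℝ)) * 1 := by
      linear_combination e2' - e1'
    exact mul_left_cancel₀ hne hkey
  have hY : Y = (n:ℝ) - 2 := by
    linear_combination e1' - (n:ℝ) * hZ
  have e3 : vnEntropy (starOn n) = Y * -(a * Real.logb 2 a) + Z * -(b * Real.logb 2 b) := by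
    have t3 : ∑ w, -(eigs (starOn n) w * Real.logb 2 (eigs (starOn n) w)) =
        Y * -(a * Real.logb 2 a) + Z * -(b * Real.logb 2 b) :=
      hYZ (fun x => -(x * Real.logb 2 x)) (by simp)
    exact t3
  have hla : Real.logb 2 a = - Real.logb 2 (2*(n:ℝ)-2) := by
    rw [ha, Real.logb_inv]
  have hlb : Real.logb 2 b = Real.logb 2 (n:ℝ) - Real.logb 2 (2*(n:ℝ)-2) := by
    rw [hb, ← div_eq_mul_inv, Real.logb_div (ne_of_gt hnpos) (ne_of_gt h2n2)]
  rw [e3, hY, hZ, hla, hlb, ha, hb]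
  have hk : (2*(n:ℝ)-2)⁻¹ * (2*(n:ℝ)-2) = 1 := inv_mul_cancel₀ (ne_of_gt h2n2)
  rw [div_eq_mul_inv]
  linear_combination (-(Real.logb 2 (2*(n:ℝ)-2))) * hk

end VNE

namespace VNE

variable {V : Type*} [Fintype V] [DecidableEq V]

theorem renyi_quantum_star_test {n : ℕ} (hn : 2 ≤ n) (G : SimpleGraph (Fin n))
    (hG : G.edgeSet.Nonempty)
    (h : degSum G ^ 2 / (∑ i, deg G i ^ 2 + degSum G) ≥
      (2 * (n : ℝ) - 2) / (n : ℝ) ^ ((n : ℝ) / (2 * n - 2))) :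
    vnEntropy G ≥ renyi2 G ∧
    renyi2 G ≥ Real.logb 2 (2 * (n : ℝ) - 2) - ((n : ℝ) / (2 * n - 2)) * Real.logb 2 n ∧
    Real.logb 2 (2 * (n : ℝ) - 2) - ((n : ℝ) / (2 * n - 2)) * Real.logb 2 n = vnEntropy (starOn n) := by
  have hn2 : (2:ℝ) ≤ (n:ℝ) := by exact_mod_cast hn
  have h2n2 : (0:ℝ) < 2*(n:ℝ)-2 := by linarith
  have hnpos : (0:ℝ) < (n:ℝ) := by linarith
  refine ⟨vnEntropy_ge_renyi2 G hG, ?_, star_vnEntropy hn⟩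
  have hds := degSum_pos G hG
  have hQpos : 0 < ∑ i, deg G i ^ 2 + degSum G :=
    add_pos_of_nonneg_of_pos (Finset.sum_nonneg fun i _ => sq_nonneg _) hds
  have hRpos : (0:ℝ) < (2 * (n : ℝ) - 2) / (n : ℝ) ^ ((n : ℝ) / (2 * n - 2)) :=
    div_pos h2n2 (Real.rpow_pos_of_pos hnpos _)
  rw [renyi2_eq]
  have hmono := Real.logb_le_logb_of_le (b := 2) one_lt_two hRpos h
  refine le_trans (le_of_eq ?_) hmono
  rw [Real.logb_div (ne_of_gt h2n2) (ne_of_gt (Real.rpow_pos_of_pos hnpos _))]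
  congr 1
  rw [Real.logb, Real.logb, Real.log_rpow hnpos]
  ring

end VNE
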